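/- Let r ≥ 1 and k' ≥ 1, and let α = (α_1,…,α_{2k'}) be a tuple of nonnegative integers of even length 2k'. Then the concatenation of 2r+1 copies of α (a tuple of length 2k with k = (2r+1)k') is a wheel-sequence of length 2k if and only if α itself is a wheel-sequence of length 2k'. -/

import Mathlib

open PowerSeries Filter

/-- Cyclic shift of an index of `Fin m` by `j` positions. -/
def cycIdx {m : ℕ} (i : Fin m) (j : ℕ) : Fin m :=
  ⟨(i.val + j) % m, Nat.mod_lt _ i.pos⟩

/-- Reflected index `(l - i) mod m` (computed as `(l + (m - i)) % m`). -/
def reflIdx {m : ℕ} (l : ℕ) (i : Fin m) : Fin m :=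
  ⟨(l + (m - i.val)) % m, Nat.mod_lt _ i.pos⟩

/-- `a` is a wheel-sequence of length `2*k`: (S1) two opposite entries are not both `0`,
(S2) two neighbouring entries are not both `0`. -/
def IsWheelSeq (k : ℕ) (a : Fin (2*k) → ℕ) : Prop :=
  (∀ i : Fin (2*k), ¬ (a i = 0 ∧ a (cycIdx i k) = 0)) ∧
  (∀ i : Fin (2*k), ¬ (a i = 0 ∧ a (cycIdx i 1) = 0))

/-- The size of a tuple: the sum of its entries. -/
def seqSize {m : ℕ} (a : Fin m → ℕ) : ℕ := ∑ i, a i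

/-- The rotation `(l,+)` of the dihedral group acting on tuples. -/
def rotAct {m : ℕ} (l : ℕ) (a : Fin m → ℕ) : Fin m → ℕ := fun i => a (cycIdx i l)

/-- The reflection `(l,-)` of the dihedral group acting on tuples. -/
def reflAct {m : ℕ} (l : ℕ) (a : Fin m → ℕ) : Fin m → ℕ := fun i => a (reflIdx l i)

/-- `b` is obtained from `a` by a rotation. -/
def RotEquiv {m : ℕ} (a b : Fin m → ℕ) : Prop := ∃ l : ℕ, b = rotAct l a

/-- `b` is obtained from `a` by an element of the dihedral group. -/
def DihEquiv {m : ℕ} (a b : Fin m → ℕ) : Prop := ∃ l : ℕ, b = rotAct l a ∨ b = reflAct l a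

/-- Wheel-sequences of size `n` and length `2*k`. -/
def wheelSet (n k : ℕ) : Set (Fin (2*k) → ℕ) := {a | IsWheelSeq k a ∧ seqSize a = n}

/-- The half-plane condition (P3). -/
def HalfPlane (k : ℕ) (a : Fin (2*k) → ℕ) : Prop :=
  ∀ i : Fin (2*k), 2 ≤ ∑ j ∈ Finset.Ico 1 k, a (cycIdx i j)

/-- `R_{n,k}`: the number of wheel-sequences of size `n` and length `2k`. -/
noncomputable def Rcount (n k : ℕ) : ℕ := (wheelSet n k).ncard

/-- `W_{n,k}`: the number of orbits of wheel-sequences of size `n` and length `2k`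
under the dihedral group. -/
noncomputable def Wcount (n k : ℕ) : ℕ :=
  Nat.card (Quot fun (a b : wheelSet n k) => DihEquiv a.1 b.1)

/-- `W⁺_{n,k}`: the number of orbits of wheel-sequences of size `n` and length `2k`
under the rotation subgroup. -/
noncomputable def WplusCount (n k : ℕ) : ℕ :=
  Nat.card (Quot fun (a b : wheelSet n k) => RotEquiv a.1 b.1)

/-- `R⁺_{n,k}`: pairs of a wheel-sequence and a nontrivial rotation fixing it. -/
noncomputable def RplusCount (n k : ℕ) : ℕ :=
  Set.ncard {p : (Fin (2*k) → ℕ) × ℕ |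
    p.1 ∈ wheelSet n k ∧ 1 ≤ p.2 ∧ p.2 < 2*k ∧ rotAct p.2 p.1 = p.1}

/-- `R⁻_{n,k}`: pairs of a wheel-sequence and a reflection fixing it. -/
noncomputable def RminusCount (n k : ℕ) : ℕ :=
  Set.ncard {p : (Fin (2*k) → ℕ) × ℕ |
    p.1 ∈ wheelSet n k ∧ p.2 < 2*k ∧ reflAct p.2 p.1 = p.1}

/-- Wheel-sequences of size `n` and length `2k` violating the half-plane condition. -/
def nonHPSet (n k : ℕ) : Set (Fin (2*k) → ℕ) := {a | a ∈ wheelSet n k ∧ ¬ HalfPlane k a}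

noncomputable def WbarCount (n k : ℕ) : ℕ :=
  Nat.card (Quot fun (a b : nonHPSet n k) => DihEquiv a.1 b.1)

noncomputable def WbarPlusCount (n k : ℕ) : ℕ :=
  Nat.card (Quot fun (a b : nonHPSet n k) => RotEquiv a.1 b.1)

/-- Reduced Gale diagrams of size `n` with `k` diameters: a centre label together with a
wheel-sequence of length `2k` satisfying the half-plane condition. -/
def galeSet (n k : ℕ) : Set (ℕ × (Fin (2*k) → ℕ)) :=
  {p | IsWheelSeq k p.2 ∧ HalfPlane k p.2 ∧ p.1 + seqSize p.2 = n}

noncomputable def galeCountDih (n k : ℕ) : ℕ :=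
  Nat.card (Quot fun (p q : galeSet n k) => p.1.1 = q.1.1 ∧ DihEquiv p.1.2 q.1.2)

noncomputable def galeCountRot (n k : ℕ) : ℕ :=
  Nat.card (Quot fun (p q : galeSet n k) => p.1.1 = q.1.1 ∧ RotEquiv p.1.2 q.1.2)

/-- `g_n`: the number of equivalence classes of reduced Gale diagrams of size `n`
(a wheel-sequence of size at most `n` has at most `n` diameters). -/
noncomputable def galeCount (n : ℕ) : ℕ := ∑ k ∈ Finset.Icc 2 n, galeCountDih n k

/-- `g⁺_n`: the number of rotation-equivalence classes of reduced Gale diagrams of size `n`. -/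
noncomputable def galePlusCount (n : ℕ) : ℕ := ∑ k ∈ Finset.Icc 2 n, galeCountRot n k

/-- Formal `Λ(f) = -log(1-f) = ∑_{m ≥ 1} f^m / m`, defined coefficientwise
(each coefficient is a finite sum; exact whenever `f` has zero constant term). -/
noncomputable def Lam (f : PowerSeries ℚ) : PowerSeries ℚ :=
  PowerSeries.mk fun n => ∑ m ∈ Finset.Icc 1 n, (PowerSeries.coeff n) (f ^ m) / (m : ℚ)

/-- Coefficientwise sum `∑_{e ≥ 1} t e` (exact whenever `t e` has order at least `e`). -/
noncomputable def seriesSum (t : ℕ → PowerSeries ℚ) : PowerSeries ℚ :=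
  PowerSeries.mk fun n => ∑ e ∈ Finset.Icc 1 n, (PowerSeries.coeff n) (t e)

/-!
The concatenation of `m` copies of `α` is its periodic extension `i ↦ α (i mod 2k)`. For odd `m`
we have `m·k ≡ k (mod 2k)`, so in the extension the entry opposite position `i` (at distance
`m·k`) is the entry of `α` opposite `i mod 2k`, and the neighbour of `i` is the neighbour of
`i mod 2k`. Both wheel conditions on the extension are therefore exactly the conditions on `α`.
-/

theorem Nat.mul_modEq_of_odd {m : ℕ} (hm : Odd m) (k : ℕ) : m * k ≡ k [MOD 2 * k] := by
  obtain ⟨r, rfl⟩ := hm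
  calc (2 * r + 1) * k = k + r * (2 * k) := by ring
    _ ≡ k [MOD 2 * k] := Nat.add_mul_modulus_modEq_iff.mpr rfl

theorem cycIdx_val_mod_of_dvd {n p : ℕ} (hp : 0 < p) (hpn : p ∣ n) {j j' : ℕ}
    (hj : j ≡ j' [MOD p]) (i : Fin n) :
    (cycIdx i j).val % p = (cycIdx (⟨i.val % p, Nat.mod_lt _ hp⟩ : Fin p) j').val := by
  simp only [cycIdx, Nat.mod_mod_of_dvd _ hpn, Nat.mod_add_mod]
  exact hj.add_left _

theorem forall_cycIdx_periodic_iff {n p : ℕ} (hp : 0 < p) (hpn : p ∣ n) (hn : 0 < n)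
    (α : Fin p → ℕ) (P : ℕ → ℕ → Prop) {j j' : ℕ} (hj : j ≡ j' [MOD p]) :
    (∀ i : Fin n, P (α ⟨i.val % p, Nat.mod_lt _ hp⟩)
        (α ⟨(cycIdx i j).val % p, Nat.mod_lt _ hp⟩)) ↔
      ∀ i : Fin p, P (α i) (α (cycIdx i j')) := by
  simp only [cycIdx_val_mod_of_dvd hp hpn hj]
  constructor
  · intro h i
    have hin : i.val < n := i.isLt.trans_le (Nat.le_of_dvd hn hpn)
    simpa [Nat.mod_eq_of_lt i.isLt] using h ⟨i, hin⟩
  · exact fun h i => h _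

theorem isWheelSeq_periodic_iff {m k : ℕ} (hm : Odd m) (hk : 0 < k) (α : Fin (2 * k) → ℕ) :
    IsWheelSeq (m * k) (fun i : Fin (2 * (m * k)) => α ⟨i.val % (2 * k), Nat.mod_lt _ (by omega)⟩)
      ↔ IsWheelSeq k α := by
  have hp : 0 < 2 * k := by omega
  have hpn : 2 * k ∣ 2 * (m * k) := Dvd.intro_left m (by ring)
  have hn : 0 < 2 * (m * k) := by have := hm.pos; positivity
  let notBothZero : ℕ → ℕ → Prop := fun x y => ¬(x = 0 ∧ y = 0)
  exact and_congr
    (forall_cycIdx_periodic_iff hp hpn hn α notBothZero (Nat.mul_modEq_of_odd hm k))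
    (forall_cycIdx_periodic_iff hp hpn hn α notBothZero rfl)

/-- The concatenation of `2r+1` copies of a tuple `α` of even length `2k'` is a
wheel-sequence of length `(2r+1)·2k'` if and only if `α` is itself a wheel-sequence. -/
theorem odd_copies_wheelseq (r k' : ℕ) (hk' : 1 ≤ k') (α : Fin (2 * k') → ℕ) :
    IsWheelSeq ((2 * r + 1) * k')
        (fun i : Fin (2 * ((2 * r + 1) * k')) => α ⟨i.val % (2 * k'), Nat.mod_lt _ (by omega)⟩)
      ↔ IsWheelSeq k' α :=
  isWheelSeq_periodic_iff (odd_two_mul_add_one r) hk' α
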